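/- For any a ∈ ℝ^5 and the unit sphere S^4 ⊂ ℝ^5, ∫_{S^4} |x - a| dH^4(x) ≥ ∫_{S^4} |x| dH^4(x) = |S^4|, with equality iff a = 0. -/

import Mathlib

/-!
The reflection `x ↦ -x` preserves `μH[4]` on the sphere, so `∫ ‖x - a‖ = ∫ ‖x + a‖` and hence
`2 ∫ ‖x - a‖ = ∫ (‖x - a‖ + ‖x + a‖) ≥ ∫ 2 ‖x‖` by the triangle inequality. The Euclidean norm is
strictly convex, so pointwise equality `‖x - a‖ + ‖x + a‖ = 2 ‖x‖` forces `x - a` and `x + a` onto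
one ray, i.e. `x ∈ ℝ ∙ a` when `a ≠ 0`. A line is `μH[4]`-null, whereas the sphere has positive
and finite `μH[4]`-measure, being locally a Lipschitz graph over a ball of a hyperplane; so equality
of the integrals forces `a = 0`.
-/

open MeasureTheory Metric Module Set
open scoped RealInnerProductSpace ENNReal

section TriangleEquality

variable {E : Type*} [NormedAddCommGroup E] [NormedSpace ℝ E]

theorem two_mul_norm_le_norm_sub_add_norm_add (x a : E) : 2 * ‖x‖ ≤ ‖x - a‖ + ‖x + a‖ :=
  calc 2 * ‖x‖ = ‖(x - a) + (x + a)‖ := by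
        rw [sub_add_add_cancel, ← two_smul ℝ x, norm_smul, Real.norm_two]
    _ ≤ ‖x - a‖ + ‖x + a‖ := norm_add_le _ _

theorem mem_span_singleton_of_norm_sub_add_norm_add_eq [StrictConvexSpace ℝ E] {x a : E}
    (h : ‖x - a‖ + ‖x + a‖ = 2 * ‖x‖) : a ∈ ℝ ∙ x := by
  have hray : SameRay ℝ (x - a) (x + a) := by
    rw [sameRay_iff_norm_add, sub_add_add_cancel, ← two_smul ℝ x, norm_smul, Real.norm_two, h]
  obtain ⟨s, t, -, -, -, hs, ht⟩ := hray.exists_eq_smul_add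
  rw [sub_add_add_cancel, ← two_smul ℝ x] at hs ht
  refine Submodule.mem_span_singleton.2 ⟨t - s, ?_⟩
  have : (2 : ℝ) • a = (2 : ℝ) • ((t - s) • x) := by
    rw [smul_comm, sub_smul, ← ht, ← hs, two_smul]
    abel
  exact (smul_right_injective E two_ne_zero this).symm

end TriangleEquality

section SymmetricMeasure

variable {E : Type*} [NormedAddCommGroup E] [MeasurableSpace E] {μ : Measure E}

theorem integral_norm_add_eq_integral_norm_sub [MeasurableNeg E] [μ.IsNegInvariant] (a : E) :
    ∫ x, ‖x + a‖ ∂μ = ∫ x, ‖x - a‖ ∂μ := by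
  rw [← integral_neg_eq_self]
  simp_rw [← norm_neg (-_ + a), neg_add, neg_neg, ← sub_eq_add_neg]

variable [IsFiniteMeasure μ]

theorem integrable_norm_sub_add_norm_add (hμ : Integrable id μ) (a : E) :
    Integrable (fun x ↦ ‖x - a‖ + ‖x + a‖) μ :=
  (hμ.sub (integrable_const a)).norm.add (hμ.add (integrable_const a)).norm

variable [MeasurableNeg E] [μ.IsNegInvariant]

theorem two_mul_integral_norm_sub (hμ : Integrable id μ) (a : E) :
    2 * ∫ x, ‖x - a‖ ∂μ = ∫ x, (‖x - a‖ + ‖x + a‖) ∂μ := by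
  have hsub : Integrable (fun x ↦ ‖x - a‖) μ := (hμ.sub (integrable_const a)).norm
  have hadd : Integrable (fun x ↦ ‖x + a‖) μ := (hμ.add (integrable_const a)).norm
  rw [integral_add hsub hadd, integral_norm_add_eq_integral_norm_sub, two_mul]

variable [NormedSpace ℝ E]

theorem integral_norm_le_integral_norm_sub (hμ : Integrable id μ) (a : E) :
    ∫ x, ‖x‖ ∂μ ≤ ∫ x, ‖x - a‖ ∂μ := by
  have h2norm : Integrable (fun x ↦ 2 * ‖x‖) μ := hμ.norm.const_mul 2
  have := integral_mono h2norm (integrable_norm_sub_add_norm_add hμ a)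
    (two_mul_norm_le_norm_sub_add_norm_add · a)
  rw [integral_const_mul, ← two_mul_integral_norm_sub hμ] at this
  linarith

theorem ae_norm_sub_add_norm_add_eq_of_integral_eq (hμ : Integrable id μ) {a : E}
    (h : ∫ x, ‖x - a‖ ∂μ = ∫ x, ‖x‖ ∂μ) : ∀ᵐ x ∂μ, ‖x - a‖ + ‖x + a‖ = 2 * ‖x‖ := by
  have h2norm : Integrable (fun x ↦ 2 * ‖x‖) μ := hμ.norm.const_mul 2
  have hzero : ∫ x, (‖x - a‖ + ‖x + a‖ - 2 * ‖x‖) ∂μ = 0 := by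
    rw [integral_sub (integrable_norm_sub_add_norm_add hμ a) h2norm,
      ← two_mul_integral_norm_sub hμ, integral_const_mul, h, sub_self]
  filter_upwards [(integral_eq_zero_iff_of_nonneg
    (fun x ↦ sub_nonneg.2 (two_mul_norm_le_norm_sub_add_norm_add x a))
    ((integrable_norm_sub_add_norm_add hμ a).sub h2norm)).1 hzero] with x hx
  exact sub_eq_zero.1 hx

theorem integral_norm_sub_eq_integral_norm_iff [StrictConvexSpace ℝ E] (hμ : Integrable id μ)
    (hμ₀ : μ ≠ 0) {a : E} (hline : μ (ℝ ∙ a) = 0) :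
    ∫ x, ‖x - a‖ ∂μ = ∫ x, ‖x‖ ∂μ ↔ a = 0 := by
  refine ⟨fun h ↦ ?_, fun h ↦ by simp [h]⟩
  by_contra ha
  have hae : ∀ᵐ x ∂μ, x ∈ ℝ ∙ a := by
    filter_upwards [ae_norm_sub_add_norm_add_eq_of_integral_eq hμ h] with x hx
    obtain ⟨t, rfl⟩ := Submodule.mem_span_singleton.1
      (mem_span_singleton_of_norm_sub_add_norm_add_eq hx)
    have ht : t ≠ 0 := by
      rintro rfl
      exact ha (zero_smul ℝ x)
    exact Submodule.mem_span_singleton.2 ⟨t⁻¹, inv_smul_smul₀ ht x⟩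
  exact hμ₀ (Measure.measure_univ_eq_zero.1 (measure_mono_null (fun x _ ↦ em (x ∈ ℝ ∙ a))
    (measure_union_null hline (ae_iff.1 hae))))

end SymmetricMeasure

theorem MeasureTheory.Measure.IsNegInvariant.restrict {G : Type*} [MeasurableSpace G]
    [InvolutiveNeg G] [MeasurableNeg G] (μ : Measure G) [μ.IsNegInvariant] {s : Set G}
    (hs : Neg.neg ⁻¹' s = s) : (μ.restrict s).IsNegInvariant := by
  constructor
  calc (μ.restrict s).neg = (μ.restrict (Neg.neg ⁻¹' s)).map Neg.neg := by rw [hs]; rfl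
    _ = (μ.map Neg.neg).restrict s :=
      ((MeasurableEquiv.neg G).measurableEmbedding.restrict_map μ s).symm
    _ = μ.restrict s := by rw [Measure.map_neg_eq_self]

section HausdorffMeasure

variable {E : Type*} [NormedAddCommGroup E] [MeasurableSpace E] [BorelSpace E]

instance (d : ℝ) : (μH[d] : Measure E).IsNegInvariant :=
  ⟨(IsometryEquiv.neg E).map_hausdorffMeasure d⟩

instance (d r : ℝ) : ((μH[d] : Measure E).restrict (sphere 0 r)).IsNegInvariant :=
  Measure.IsNegInvariant.restrict _ (by ext; simp)

theorem hausdorffMeasure_span_singleton_eq_zero [NormedSpace ℝ E] {d : ℝ} (hd : 1 < d) (a : E) :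
    μH[d] (ℝ ∙ a : Set E) = 0 := by
  lift d to NNReal using zero_le_one.trans hd.le
  refine hausdorffMeasure_of_dimH_lt ?_
  rw [Submodule.span_singleton_eq_range]
  refine ((contDiff_id.smul contDiff_const).dimH_range_le).trans_lt ?_
  rw [finrank_self]
  exact_mod_cast hd

theorem setIntegral_norm_sphere_zero (μ : Measure E) (r : ℝ) :
    ∫ x in sphere (0 : E) r, ‖x‖ ∂μ = μ.real (sphere 0 r) * r := by
  rw [setIntegral_congr_fun isClosed_sphere.measurableSet
    (fun x hx ↦ mem_sphere_zero_iff_norm.1 hx), setIntegral_const, smul_eq_mul]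

theorem integrable_id_restrict_sphere [SecondCountableTopology E] {μ : Measure E} {r : ℝ}
    (hμ : μ (sphere 0 r) ≠ ∞) : Integrable id (μ.restrict (sphere 0 r)) := by
  have := isFiniteMeasure_restrict.2 hμ
  exact .of_bound aestronglyMeasurable_id r (ae_restrict_of_forall_mem
    isClosed_sphere.measurableSet fun x hx ↦ (mem_sphere_zero_iff_norm.1 hx).le)

end HausdorffMeasure

section SphereGraph

variable {E : Type*} [NormedAddCommGroup E] [InnerProductSpace ℝ E]

noncomputable def sphereGraph (p : E) (r : ℝ) (y : (ℝ ∙ p)ᗮ) : E :=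
  (y : E) + √(r ^ 2 - ‖y‖ ^ 2) • p

variable {p : E} {r : ℝ}

theorem norm_sphereGraph (hp : ‖p‖ = 1) {y : (ℝ ∙ p)ᗮ} (hy : ‖y‖ ≤ r) :
    ‖sphereGraph p r y‖ = r := by
  have hyp : ⟪(y : E), √(r ^ 2 - ‖y‖ ^ 2) • p⟫ = 0 := Submodule.inner_left_of_mem_orthogonal
    (Submodule.smul_mem _ _ (Submodule.mem_span_singleton_self p)) y.2
  have h := norm_add_sq_eq_norm_sq_add_norm_sq_real hyp
  rw [norm_smul, hp, mul_one, Real.norm_of_nonneg (Real.sqrt_nonneg _),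
    Real.mul_self_sqrt (by nlinarith [norm_nonneg y])] at h
  rw [sphereGraph, ← mul_self_inj (norm_nonneg _) ((norm_nonneg _).trans hy), h,
    Submodule.coe_norm]
  ring

theorem orthogonalProjectionOnto_sphereGraph (y : (ℝ ∙ p)ᗮ) :
    (ℝ ∙ p)ᗮ.orthogonalProjectionOnto (sphereGraph p r y) = y := by
  rw [sphereGraph, map_add, map_smul,
    Submodule.orthogonalProjectionOnto_orthogonalComplement_singleton_eq_zero, smul_zero, add_zero,
    Submodule.orthogonalProjectionOnto_mem_subspace_eq_self]

theorem sphereGraph_orthogonalProjectionOnto (hp : ‖p‖ = 1) {x : E} (hx : ‖x‖ = r)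
    (hxp : 0 ≤ ⟪p, x⟫) : sphereGraph p r ((ℝ ∙ p)ᗮ.orthogonalProjectionOnto x) = x := by
  have hsplit := Submodule.starProjection_add_starProjection_orthogonal (K := ℝ ∙ p) x
  have hpyth := Submodule.norm_sq_eq_add_norm_sq_starProjection x (ℝ ∙ p)
  rw [Submodule.starProjection_unit_singleton ℝ hp] at hsplit hpyth
  rw [norm_smul, hp, mul_one, Real.norm_eq_abs, sq_abs, hx] at hpyth
  rw [sphereGraph, ← Submodule.starProjection_apply, Submodule.coe_norm,
    ← Submodule.starProjection_apply,
    show r ^ 2 - ‖(ℝ ∙ p)ᗮ.starProjection x‖ ^ 2 = ⟪p, x⟫ ^ 2 by linarith, Real.sqrt_sq hxp,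
    add_comm, hsplit]

theorem sphere_inter_ball_subset_image_sphereGraph (hp : ‖p‖ = 1) :
    sphere 0 r ∩ ball (r • p) (r / 2) ⊆ sphereGraph p r '' closedBall 0 (r / 2) := by
  set P := (ℝ ∙ p)ᗮ.orthogonalProjectionOnto
  have hPp : P (r • p) = 0 := by
    rw [map_smul, Submodule.orthogonalProjectionOnto_orthogonalComplement_singleton_eq_zero,
      smul_zero]
  rintro x ⟨hx, hxp⟩
  rw [mem_sphere_zero_iff_norm] at hx
  rw [mem_ball, dist_eq_norm] at hxp
  refine ⟨P x, ?_, sphereGraph_orthogonalProjectionOnto hp hx ?_⟩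
  · rw [mem_closedBall_zero_iff, ← sub_zero (P x), ← hPp, ← map_sub]
    exact (Submodule.norm_orthogonalProjectionOnto_apply_le _ _).trans hxp.le
  · have h1 : ⟪p, r • p - x⟫ ≤ ‖x - r • p‖ := by
      simpa [hp, norm_sub_rev] using real_inner_le_norm p (r • p - x)
    rw [inner_sub_right, real_inner_smul_right, real_inner_self_eq_norm_sq, hp] at h1
    nlinarith [norm_nonneg x]

theorem exists_lipschitzOnWith_sphereGraph [FiniteDimensional ℝ E] {ρ : ℝ} (hρr : ρ < r) :
    ∃ K, LipschitzOnWith K (sphereGraph p r) (closedBall 0 ρ) := by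
  have hsqrt : ContDiffOn ℝ 1 (fun y : (ℝ ∙ p)ᗮ ↦ √(r ^ 2 - ‖y‖ ^ 2)) (closedBall 0 ρ) := by
    refine (contDiff_const.sub (contDiff_norm_sq ℝ)).contDiffOn.sqrt fun y hy ↦ ?_
    rw [mem_closedBall_zero_iff] at hy
    nlinarith [norm_nonneg y]
  exact ((ℝ ∙ p)ᗮ.subtypeL.contDiff.contDiffOn.add (hsqrt.smul contDiffOn_const))
    |>.exists_lipschitzOnWith one_ne_zero (convex_closedBall 0 ρ) (isCompact_closedBall 0 ρ)

end SphereGraph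

section SphereMeasure

variable {E : Type*} [NormedAddCommGroup E] [InnerProductSpace ℝ E] [FiniteDimensional ℝ E]
  [MeasurableSpace E] [BorelSpace E] {n : ℕ} {r : ℝ}

theorem isAddHaarMeasure_hausdorffMeasure_orthogonal_span_singleton (hn : finrank ℝ E = n + 1)
    {p : E} (hp : p ≠ 0) : (μH[n] : Measure (ℝ ∙ p)ᗮ).IsAddHaarMeasure := by
  have : Fact (finrank ℝ E = n + 1) := ⟨hn⟩
  rw [← Submodule.finrank_orthogonal_span_singleton (𝕜 := ℝ) (n := n) hp]
  exact isAddHaarMeasure_hausdorffMeasure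

theorem hausdorffMeasure_sphere_pos (hn : finrank ℝ E = n + 1) (hr : 0 < r) :
    0 < μH[n] (sphere (0 : E) r) := by
  have := Module.nontrivial_of_finrank_eq_succ hn
  obtain ⟨p, hp⟩ := exists_norm_eq E zero_le_one
  have := isAddHaarMeasure_hausdorffMeasure_orthogonal_span_singleton hn
    (norm_ne_zero_iff.1 (hp.trans_ne one_ne_zero))
  set P := (ℝ ∙ p)ᗮ.orthogonalProjectionOnto
  have hball : ball (0 : (ℝ ∙ p)ᗮ) r ⊆ P '' sphere 0 r := fun y hy ↦
    ⟨sphereGraph p r y, mem_sphere_zero_iff_norm.2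
      (norm_sphereGraph hp (mem_ball_zero_iff.1 hy).le), orthogonalProjectionOnto_sphereGraph y⟩
  have := (measure_ball_pos μH[n] (0 : (ℝ ∙ p)ᗮ) hr).trans_le
    ((measure_mono hball).trans (P.lipschitz.hausdorffMeasure_image_le n.cast_nonneg _))
  exact pos_iff_ne_zero.2 (ENNReal.mul_pos_iff.1 this).2.ne'

theorem hausdorffMeasure_sphere_lt_top (hn : finrank ℝ E = n + 1) (hr : 0 < r) :
    μH[n] (sphere (0 : E) r) < ∞ := by
  refine (isCompact_sphere 0 r).measure_lt_top_of_nhdsWithin fun x hx ↦ ?_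
  set p := r⁻¹ • x
  have hp : ‖p‖ = 1 := by
    rw [norm_smul, mem_sphere_zero_iff_norm.1 hx, norm_inv, Real.norm_of_nonneg hr.le,
      inv_mul_cancel₀ hr.ne']
  have hxp : r • p = x := smul_inv_smul₀ hr.ne' x
  have := isAddHaarMeasure_hausdorffMeasure_orthogonal_span_singleton hn
    (norm_ne_zero_iff.1 (hp.trans_ne one_ne_zero))
  obtain ⟨K, hK⟩ := exists_lipschitzOnWith_sphereGraph (p := p) (half_lt_self hr)
  refine ⟨_, inter_mem_nhdsWithin _ (ball_mem_nhds x (half_pos hr)), ?_⟩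
  rw [← hxp]
  refine (measure_mono (sphere_inter_ball_subset_image_sphereGraph hp)).trans_lt
    ((hK.hausdorffMeasure_image_le n.cast_nonneg).trans_lt ?_)
  exact ENNReal.mul_lt_top (by simp) (isCompact_closedBall _ _).measure_lt_top

end SphereMeasure

/-- For any `a ∈ ℝ⁵` and the unit sphere `S⁴ ⊂ ℝ⁵`,
`∫_{S⁴} ‖x - a‖ dH⁴(x) ≥ ∫_{S⁴} ‖x‖ dH⁴(x) = |S⁴|`, with equality iff `a = 0`. -/
theorem sphere_integral_dist_ge (a : EuclideanSpace ℝ (Fin 5)) :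
    (∫ x in sphere (0 : EuclideanSpace ℝ (Fin 5)) 1, ‖x - a‖ ∂(μH[4])) ≥
      (∫ x in sphere (0 : EuclideanSpace ℝ (Fin 5)) 1, ‖x‖ ∂(μH[4])) ∧
    (∫ x in sphere (0 : EuclideanSpace ℝ (Fin 5)) 1, ‖x‖ ∂(μH[4])) =
      (μH[4] (sphere (0 : EuclideanSpace ℝ (Fin 5)) 1)).toReal ∧
    ((∫ x in sphere (0 : EuclideanSpace ℝ (Fin 5)) 1, ‖x - a‖ ∂(μH[4])) =
        (∫ x in sphere (0 : EuclideanSpace ℝ (Fin 5)) 1, ‖x‖ ∂(μH[4])) ↔ a = 0) := by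
  have hdim : finrank ℝ (EuclideanSpace ℝ (Fin 5)) = 4 + 1 := finrank_euclideanSpace_fin
  have hpos : 0 < μH[4] (sphere (0 : EuclideanSpace ℝ (Fin 5)) 1) := by
    exact_mod_cast hausdorffMeasure_sphere_pos hdim one_pos
  have hfin : μH[4] (sphere (0 : EuclideanSpace ℝ (Fin 5)) 1) < ∞ := by
    exact_mod_cast hausdorffMeasure_sphere_lt_top hdim one_pos
  have := isFiniteMeasure_restrict.2 hfin.ne
  have hid := integrable_id_restrict_sphere hfin.ne
  have hline : μH[4].restrict (sphere 0 1) (ℝ ∙ a : Set (EuclideanSpace ℝ (Fin 5))) = 0 :=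
    nonpos_iff_eq_zero.1 ((Measure.restrict_apply_le _ _).trans
      (hausdorffMeasure_span_singleton_eq_zero (by norm_num) a).le)
  refine ⟨integral_norm_le_integral_norm_sub hid a, ?_, integral_norm_sub_eq_integral_norm_iff hid
    (Measure.restrict_eq_zero.not.2 hpos.ne') hline⟩
  rw [setIntegral_norm_sphere_zero, mul_one, measureReal_def]
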